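/- arXiv:1810.09080 — 2 statements merged into one kernel-verified Lean document; each statement's English description precedes it below -/
import Mathlib

section
/- Let w_j, w_k, w_l, w_m, m_α, m_β be nonzero complex numbers and set A = w_m/(m_β·w_j), F = w_l/(m_α·w_m), C = (w_j·w_l)/(w_m·w_k). Assume ‖A‖ < 1, ‖F‖ < 1, ‖C‖ < 1, and that A is not a nonpositive real number. Define f : ℂ → ℂ by f(w) = Li₂(w/(m_β·w_j)) + Li₂(w_k/(m_α·w_j)) − Li₂(w_l/(m_β·w_k)) − Li₂(w_l/(m_α·w)) + Li₂((w_j·w_l)/(w·w_k)) − π²/6 + log(w/(m_β·w_j))·log(w_k/(m_α·w_j)). Then f has derivative D at w_m, where D = (1/w_m)·(−log(1−A) − log(1−F) + log(1−C) + log(w_k/(m_α·w_j))), and moreover exp(w_m·D) = (w_j·w_l − w_k·w_m)/(((1/m_β)·w_m − w_j)·(m_α·w_m − w_l)). -/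
/-!
Differentiating the series term by term gives `z * Li₂'(z) = ∑ zⁿ⁺¹/(n+1) = -log (1 - z)` on the
unit disc, so `w * d/dw` turns `Li₂ (w / a)` into `-log (1 - w / a)` and `Li₂ (b / w)` into
`log (1 - b / w)`, while `log (w / a)` contributes `1`. Exponentiating `w_m * D` then gives
`(1 - C) * (w_k / (m_α w_j)) / ((1 - A) * (1 - F))`, which is the stated ratio after clearing
denominators.
-/

/-- The dilogarithm, defined by the power series `Li₂(z) = ∑_{n ≥ 1} zⁿ / n²`. -/
noncomputable def Li2 (z : ℂ) : ℂ := ∑' n : ℕ, z ^ (n + 1) / ((n : ℂ) + 1) ^ 2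

open Complex

lemma mul_tsum_pow_div_succ {z : ℂ} (hz : ‖z‖ < 1) :
    z * ∑' n : ℕ, z ^ n / (n + 1) = -log (1 - z) := by
  rw [← tsum_mul_left, ← (hasSum_taylorSeries_neg_log' hz).tsum_eq]
  simp only [pow_succ', mul_div_assoc]

lemma norm_pow_div_succ_le {z : ℂ} {r : ℝ} (hz : ‖z‖ ≤ r) (n : ℕ) :
    ‖z ^ n / (n + 1)‖ ≤ r ^ n := by
  rw [norm_div, norm_pow, ← Nat.cast_succ, norm_natCast]
  calc ‖z‖ ^ n / (n + 1 : ℕ) ≤ ‖z‖ ^ n := div_le_self (by positivity) (by simp)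
    _ ≤ r ^ n := by gcongr

lemma hasDerivAt_Li2 {z : ℂ} (hz : ‖z‖ < 1) :
    HasDerivAt Li2 (∑' n : ℕ, z ^ n / (n + 1)) z := by
  obtain ⟨r, hzr, hr1⟩ := exists_between hz
  have hr0 : 0 < r := (norm_nonneg z).trans_lt hzr
  refine hasDerivAt_tsum_of_isPreconnected (summable_geometric_of_lt_one hr0.le hr1)
    Metric.isOpen_ball (convex_ball (0 : ℂ) r).isPreconnected
    (g := fun (n : ℕ) w ↦ w ^ (n + 1) / ((n : ℂ) + 1) ^ 2) (g' := fun n w ↦ w ^ n / ((n : ℂ) + 1))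
    (fun n w _ ↦ ?_) (fun n w hw ↦ norm_pow_div_succ_le (mem_ball_zero_iff.mp hw).le n)
    (Metric.mem_ball_self hr0) (by simp) (mem_ball_zero_iff.mpr hzr)
  refine ((hasDerivAt_pow (n + 1) w).div_const (((n : ℂ) + 1) ^ 2)).congr_deriv ?_
  push_cast
  field_simp

theorem HasDerivAt.Li2 {f : ℂ → ℂ} {f' x : ℂ} (hf : HasDerivAt f f' x) (h : ‖f x‖ < 1) :
    HasDerivAt (fun w ↦ Li2 (f w)) ((∑' n : ℕ, f x ^ n / (n + 1)) * f') x :=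
  (hasDerivAt_Li2 h).comp x hf

lemma hasDerivAt_Li2_div_const {a x : ℂ} (hx : x ≠ 0) (h : ‖x / a‖ < 1) :
    HasDerivAt (fun w ↦ Li2 (w / a)) (-log (1 - x / a) / x) x := by
  refine (((hasDerivAt_id' x).div_const a).Li2 h).congr_deriv ?_
  rw [← mul_tsum_pow_div_succ h]
  field_simp

lemma hasDerivAt_Li2_const_div {b x : ℂ} (hx : x ≠ 0) (h : ‖b / x‖ < 1) :
    HasDerivAt (fun w ↦ Li2 (b / w)) (log (1 - b / x) / x) x := by
  refine (((hasDerivAt_const x b).div (hasDerivAt_id' x) hx).Li2 h).congr_deriv ?_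
  simp only [Pi.div_apply]
  rw [← neg_neg (log _), ← mul_tsum_pow_div_succ h]
  field_simp
  ring

lemma hasDerivAt_log_div_const {a x : ℂ} (h : x / a ∈ slitPlane) :
    HasDerivAt (fun w ↦ log (w / a)) (1 / x) x := by
  refine (((hasDerivAt_id' x).div_const a).clog h).congr_deriv ?_
  obtain ⟨hx, ha⟩ := div_ne_zero_iff.mp (slitPlane_ne_zero h)
  field_simp

lemma mem_slitPlane_of_forall_ofReal_ne {z : ℂ} (h : ∀ r : ℝ, r ≤ 0 → (r : ℂ) ≠ z) :
    z ∈ slitPlane :=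
  mem_slitPlane_iff_not_le_zero.mpr fun hz ↦
    h z.re (nonpos_iff.mp hz).1 (ext (ofReal_re _) (by simp [(nonpos_iff.mp hz).2]))

lemma exp_neg_log_sub_log_add_log_add_log {a b c d : ℂ} (ha : a ≠ 0) (hb : b ≠ 0) (hc : c ≠ 0)
    (hd : d ≠ 0) : exp (-log a - log b + log c + log d) = c * d / (a * b) := by
  rw [exp_add, exp_add, exp_sub, exp_neg, exp_log ha, exp_log hb, exp_log hc, exp_log hd]
  field_simp

lemma one_sub_ne_zero_of_norm_lt_one {z : ℂ} (h : ‖z‖ < 1) : 1 - z ≠ 0 :=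
  sub_ne_zero.mpr fun h1 ↦ by simp [← h1] at h

theorem crossing_potential_deriv_wm_pos_general
    (wj wk wl wm mα mβ : ℂ)
    (hwj : wj ≠ 0) (hwk : wk ≠ 0) (hwm : wm ≠ 0)
    (hmα : mα ≠ 0)
    (A F C D : ℂ)
    (hA : A = wm / (mβ * wj)) (hF : F = wl / (mα * wm))
    (hC : C = (wj * wl) / (wm * wk))
    (hAnorm : ‖A‖ < 1) (hFnorm : ‖F‖ < 1) (hCnorm : ‖C‖ < 1)
    (hAreal : ∀ r : ℝ, r ≤ 0 → (r : ℂ) ≠ A)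
    (hD : D = (1 / wm) * (-Complex.log (1 - A) - Complex.log (1 - F) + Complex.log (1 - C)
      + Complex.log (wk / (mα * wj)))) :
    HasDerivAt (fun w : ℂ =>
      Li2 (w / (mβ * wj)) + Li2 (wk / (mα * wj)) - Li2 (wl / (mβ * wk)) - Li2 (wl / (mα * w))
        + Li2 ((wj * wl) / (w * wk)) - (Real.pi : ℂ) ^ 2 / 6
        + Complex.log (w / (mβ * wj)) * Complex.log (wk / (mα * wj))) D wm ∧
    Complex.exp (wm * D) =
      (wj * wl - wk * wm) / (((1 / mβ) * wm - wj) * (mα * wm - wl)) := by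
  have hF' : F = wl / mα / wm := hF.trans (div_mul_eq_div_div ..)
  have hC' : C = wj * wl / wk / wm := hC.trans (div_mul_eq_div_div_swap ..)
  have hderiv := (((((hasDerivAt_Li2_div_const hwm (hA ▸ hAnorm)).add_const
    (Li2 (wk / (mα * wj)))).sub_const (Li2 (wl / (mβ * wk)))).sub
    (hasDerivAt_Li2_const_div hwm (hF' ▸ hFnorm))).add
    (hasDerivAt_Li2_const_div hwm (hC' ▸ hCnorm))).sub_const ((Real.pi : ℂ) ^ 2 / 6) |>.add
    ((hasDerivAt_log_div_const (hA ▸ mem_slitPlane_of_forall_ofReal_ne hAreal)).mul_const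
      (Complex.log (wk / (mα * wj))))
  refine ⟨(hderiv.congr_deriv ?_).congr_of_eventuallyEq (.of_forall fun w ↦ ?_), ?_⟩
  · rw [hD, hA, hF', hC']
    ring
  · simp only [Pi.add_apply, Pi.sub_apply]
    rw [div_mul_eq_div_div wl mα w, div_mul_eq_div_div_swap (wj * wl) w wk]
  have hwmD : wm * D =
      -log (1 - A) - log (1 - F) + log (1 - C) + log (wk / (mα * wj)) := by
    rw [hD]; field_simp
  have hnum : wj * wl - wk * wm = -(wk * wm) * (1 - C) := by rw [hC]; field_simp; ring
  have hden₁ : 1 / mβ * wm - wj = -wj * (1 - A) := by rw [hA]; field_simp; ring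
  have hden₂ : mα * wm - wl = mα * wm * (1 - F) := by rw [hF]; field_simp
  have h1A := one_sub_ne_zero_of_norm_lt_one hAnorm
  have h1F := one_sub_ne_zero_of_norm_lt_one hFnorm
  rw [hwmD, exp_neg_log_sub_log_add_log_add_log h1A h1F (one_sub_ne_zero_of_norm_lt_one hCnorm)
    (div_ne_zero hwk (mul_ne_zero hmα hwj)), hnum, hden₁, hden₂]
  field_simp

/-- The crossing potential of a positive crossing, viewed as a function of the
region variable `w_m`, has derivative `D` at `w_m`, and `exp (w_m * D) = τ_{c,m}`. -/
theorem crossing_potential_deriv_wm_pos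
    (wj wk wl wm mα mβ : ℂ)
    (hwj : wj ≠ 0) (hwk : wk ≠ 0) (hwl : wl ≠ 0) (hwm : wm ≠ 0)
    (hmα : mα ≠ 0) (hmβ : mβ ≠ 0)
    (A F C D : ℂ)
    (hA : A = wm / (mβ * wj)) (hF : F = wl / (mα * wm))
    (hC : C = (wj * wl) / (wm * wk))
    (hAnorm : ‖A‖ < 1) (hFnorm : ‖F‖ < 1) (hCnorm : ‖C‖ < 1)
    (hAreal : ∀ r : ℝ, r ≤ 0 → (r : ℂ) ≠ A)
    (hD : D = (1 / wm) * (-Complex.log (1 - A) - Complex.log (1 - F) + Complex.log (1 - C)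
      + Complex.log (wk / (mα * wj)))) :
    HasDerivAt (fun w : ℂ =>
      Li2 (w / (mβ * wj)) + Li2 (wk / (mα * wj)) - Li2 (wl / (mβ * wk)) - Li2 (wl / (mα * w))
        + Li2 ((wj * wl) / (w * wk)) - (Real.pi : ℂ) ^ 2 / 6
        + Complex.log (w / (mβ * wj)) * Complex.log (wk / (mα * wj))) D wm ∧
    Complex.exp (wm * D) =
      (wj * wl - wk * wm) / (((1 / mβ) * wm - wj) * (mα * wm - wl)) :=
  crossing_potential_deriv_wm_pos_general wj wk wl wm mα mβ hwj hwk hwm hmα A F C D hA hF hC hAnorm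
    hFnorm hCnorm hAreal hD
end

section
/- Let w_j, w_k, w_l, w_m, m_α, m_β be nonzero complex numbers and set E = w_l/(m_β·w_k), F = w_l/(m_α·w_m), C = (w_j·w_l)/(w_m·w_k). Assume ‖E‖ < 1, ‖F‖ < 1, ‖C‖ < 1. Define f : ℂ → ℂ by f(w) = Li₂(w_m/(m_β·w_j)) + Li₂(w_k/(m_α·w_j)) − Li₂(w/(m_β·w_k)) − Li₂(w/(m_α·w_m)) + Li₂((w_j·w)/(w_m·w_k)) − π²/6 + log(w_m/(m_β·w_j))·log(w_k/(m_α·w_j)). Then f has derivative D at w_l, where D = (1/w_l)·(log(1−E) + log(1−F) − log(1−C)), and moreover exp(w_l·D) = (((1/m_β)·w_l − w_k)·((1/m_α)·w_l − w_m))/(w_k·w_m − w_j·w_l). -/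
open Complex

lemma norm_pow_div_natCast_add_one_le (y : ℂ) (n : ℕ) :
    ‖y ^ n / ((n : ℂ) + 1)‖ ≤ ‖y‖ ^ n := by
  rw [norm_div, norm_pow]
  refine div_le_self (by positivity) ?_
  rw [← Nat.cast_add_one, Complex.norm_natCast]
  exact_mod_cast Nat.le_add_left 1 n

lemma hasDerivAt_Li2_tsum {z : ℂ} (hz : ‖z‖ < 1) :
    HasDerivAt Li2 (∑' n : ℕ, z ^ n / ((n : ℂ) + 1)) z := by
  obtain ⟨r, hzr, hr1⟩ := exists_between hz
  have hr0 : 0 < r := (norm_nonneg z).trans_lt hzr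
  have hterm (n : ℕ) (y : ℂ) :
      HasDerivAt (fun w : ℂ => w ^ (n + 1) / ((n : ℂ) + 1) ^ 2) (y ^ n / ((n : ℂ) + 1)) y := by
    refine ((hasDerivAt_pow (n + 1) y).div_const _).congr_deriv ?_
    have hn : (n : ℂ) + 1 ≠ 0 := Nat.cast_add_one_ne_zero n
    push_cast
    field_simp
  refine hasDerivAt_tsum_of_isPreconnected (summable_geometric_of_lt_one hr0.le hr1)
    Metric.isOpen_ball (convex_ball 0 r).isPreconnected (fun n y _ => hterm n y)
    (fun n y hy => ?_) (Metric.mem_ball_self hr0) ?_ (mem_ball_zero_iff.mpr hzr)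
  · exact (norm_pow_div_natCast_add_one_le y n).trans
      (pow_le_pow_left₀ (norm_nonneg y) (mem_ball_zero_iff.mp hy).le n)
  · simp

lemma hasSum_pow_div_natCast_add_one {z : ℂ} (hz : ‖z‖ < 1) (hz0 : z ≠ 0) :
    HasSum (fun n : ℕ => z ^ n / ((n : ℂ) + 1)) (-log (1 - z) / z) := by
  have h := (hasSum_taylorSeries_neg_log' hz).div_const z
  refine h.congr_fun fun n => ?_
  rw [pow_succ]
  field_simp

lemma hasDerivAt_Li2_s4 {z : ℂ} (hz : ‖z‖ < 1) (hz0 : z ≠ 0) :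
    HasDerivAt Li2 (-log (1 - z) / z) z :=
  (hasSum_pow_div_natCast_add_one hz hz0).tsum_eq ▸ hasDerivAt_Li2_tsum hz

lemma hasDerivAt_Li2_comp {f : ℂ → ℂ} {f' x : ℂ} (hf : HasDerivAt f f' x) (h1 : ‖f x‖ < 1)
    (h0 : f x ≠ 0) : HasDerivAt (fun w => Li2 (f w)) (-log (1 - f x) / f x * f') x :=
  (hasDerivAt_Li2_s4 h1 h0).comp x hf

lemma one_sub_ne_zero_of_norm_lt_one_s4 {R : Type*} [NormedRing R] [NormOneClass R] {z : R}
    (hz : ‖z‖ < 1) : 1 - z ≠ 0 :=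
  sub_ne_zero.mpr fun h => by simp [← h] at hz

/-- The crossing potential of a positive crossing, viewed as a function of the
region variable `w_l`, has derivative `D` at `w_l`, and `exp (w_l * D) = τ_{c,l}`. -/
theorem crossing_potential_deriv_wl_pos
    (wj wk wl wm mα mβ : ℂ)
    (hwj : wj ≠ 0) (hwk : wk ≠ 0) (hwl : wl ≠ 0) (hwm : wm ≠ 0)
    (hmα : mα ≠ 0) (hmβ : mβ ≠ 0)
    (E F C D : ℂ)
    (hE : E = wl / (mβ * wk)) (hF : F = wl / (mα * wm))
    (hC : C = (wj * wl) / (wm * wk))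
    (hEnorm : ‖E‖ < 1) (hFnorm : ‖F‖ < 1) (hCnorm : ‖C‖ < 1)
    (hD : D = (1 / wl) * (Complex.log (1 - E) + Complex.log (1 - F) - Complex.log (1 - C))) :
    HasDerivAt (fun w : ℂ =>
      Li2 (wm / (mβ * wj)) + Li2 (wk / (mα * wj)) - Li2 (w / (mβ * wk)) - Li2 (w / (mα * wm))
        + Li2 ((wj * w) / (wm * wk)) - (Real.pi : ℂ) ^ 2 / 6
        + Complex.log (wm / (mβ * wj)) * Complex.log (wk / (mα * wj))) D wl ∧
    Complex.exp (wl * D) =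
      (((1 / mβ) * wl - wk) * ((1 / mα) * wl - wm)) / (wk * wm - wj * wl) := by
  have hE0 : E ≠ 0 := hE ▸ div_ne_zero hwl (mul_ne_zero hmβ hwk)
  have hF0 : F ≠ 0 := hF ▸ div_ne_zero hwl (mul_ne_zero hmα hwm)
  have hC0 : C ≠ 0 := hC ▸ div_ne_zero (mul_ne_zero hwj hwl) (mul_ne_zero hwm hwk)
  have hE1 := one_sub_ne_zero_of_norm_lt_one_s4 hEnorm
  have hF1 := one_sub_ne_zero_of_norm_lt_one_s4 hFnorm
  have hC1 := one_sub_ne_zero_of_norm_lt_one_s4 hCnorm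
  subst hE hF hC
  constructor
  · have hLE := hasDerivAt_Li2_comp ((hasDerivAt_id' wl).div_const (mβ * wk)) hEnorm hE0
    have hLF := hasDerivAt_Li2_comp ((hasDerivAt_id' wl).div_const (mα * wm)) hFnorm hF0
    have hLC :=
      hasDerivAt_Li2_comp (((hasDerivAt_id' wl).const_mul wj).div_const (wm * wk)) hCnorm hC0
    refine ((((((hasDerivAt_const wl _).sub hLE).sub hLF).add hLC).sub_const _).add_const
      _).congr_deriv ?_
    subst hD
    field_simp
    ring
  · have hden : wk * wm - wj * wl ≠ 0 := by
      contrapose! hC1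
      rw [show wj * wl = wm * wk by linear_combination -hC1, div_self (mul_ne_zero hwm hwk),
        sub_self]
    rw [hD, ← mul_assoc, mul_one_div_cancel hwl, one_mul, exp_sub, exp_add, exp_log hE1,
      exp_log hF1, exp_log hC1, div_eq_div_iff hC1 hden]
    field_simp
    ring
end
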